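/- Let Φ be of class 𝒫 with parameters 1 < p < q < ∞, let Φ̃ be its complementary Young function, and let p', q' denote the Hölder conjugates of p, q. Then the constant K = ∫₀^∞ max(u^{1/q' − 1}, u^{1/p' − 1})·e^{−u} du is finite, and for every s > 0: ∫₀^∞ e^{−st} / (t·Φ̃⁻¹(1/t)) dt ≤ K / Φ̃⁻¹(s). -/

import Mathlib

open MeasureTheory Set Filter Topology ENNReal

noncomputable section

/-!
The scaling law `ρ (s t) ≤ max 1 s · ρ t` of class `𝒫` gives
`Φ⁻¹ (u t) ≤ max (u^{1/p}, u^{1/q}) · Φ⁻¹ t`. Testing the supremum defining `Φ̃` at the point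
`τ` with `u Φ τ = Φ t` turns this into `Φ̃ (min (u^{1/q'}, u^{1/p'}) · w) ≤ u · Φ̃ w`, and since
`Φ̃` is increasing this is `min (u^{1/q'}, u^{1/p'}) · Φ̃⁻¹ v ≤ Φ̃⁻¹ (u v)`. With `u = 1/(s t)`,
`v = s` it bounds the integrand by `s · max ((st)^{1/q'-1}, (st)^{1/p'-1}) e^{-st} / Φ̃⁻¹ s`, and
the substitution `u = s t` leaves `K / Φ̃⁻¹ s`; `K` is finite as a sum of two Gamma integrals.
-/

/-- `Φ` is of class `𝒫` with parameters `1 < p < q < ∞`. -/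
def IsClassP (Φ Φinv : ℝ → ℝ) (p q : ℝ) : Prop :=
  1 < p ∧ p < q ∧
  (∀ t : ℝ, 0 < t → 0 < Φ t) ∧ (∀ t : ℝ, 0 < t → 0 < Φinv t) ∧
  (∀ t : ℝ, 0 < t → Φinv (Φ t) = t) ∧ (∀ t : ℝ, 0 < t → Φ (Φinv t) = t) ∧
  ∃ ρ : ℝ → ℝ, ContinuousOn ρ (Set.Ioi 0) ∧ ConcaveOn ℝ (Set.Ioi 0) ρ ∧
    (∀ t : ℝ, 0 < t → 0 < ρ t) ∧
    (∀ s t : ℝ, 0 < s → 0 < t → ρ (s * t) ≤ max 1 s * ρ t) ∧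
    (∀ t : ℝ, 0 < t → Φinv t = t ^ (1/p) * ρ (t ^ (1/q - 1/p)))

def youngSet (Φ : ℝ → ℝ) (s : ℝ) : Set ℝ := {x : ℝ | ∃ t : ℝ, 0 ≤ t ∧ x = s * t - Φ t}

def youngConj (Φ : ℝ → ℝ) (s : ℝ) : ℝ := sSup (youngSet Φ s)

section

variable {Φ : ℝ → ℝ}

theorem sub_le_youngConj {s t : ℝ} (h : BddAbove (youngSet Φ s)) (ht : 0 ≤ t) :
    s * t - Φ t ≤ youngConj Φ s :=
  le_csSup h ⟨t, ht, rfl⟩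

theorem youngConj_le {s c : ℝ} (h : ∀ t, 0 ≤ t → s * t - Φ t ≤ c) : youngConj Φ s ≤ c :=
  csSup_le ⟨_, 0, le_rfl, rfl⟩ fun _ ⟨t, ht, hx⟩ => hx ▸ h t ht

theorem bddAbove_youngSet_of_le {a b : ℝ} (hab : a ≤ b) (hb : BddAbove (youngSet Φ b)) :
    BddAbove (youngSet Φ a) := by
  obtain ⟨c, hc⟩ := hb
  refine ⟨c, ?_⟩
  rintro _ ⟨t, ht, rfl⟩
  calc a * t - Φ t ≤ b * t - Φ t := by gcongr
    _ ≤ c := hc ⟨t, ht, rfl⟩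

/-- An unbounded `youngSet Φ s` stays unbounded for larger `s`, where the junk value
`sSup = 0` then makes `youngConj Φ` constant. -/
theorem bddAbove_youngSet_of_injOn (hinj : InjOn (youngConj Φ) (Ioi 0)) {s : ℝ} (hs : 0 < s) :
    BddAbove (youngSet Φ s) := by
  by_contra h
  have h' : ¬BddAbove (youngSet Φ (s + 1)) := mt (bddAbove_youngSet_of_le (by linarith)) h
  have : youngConj Φ s = youngConj Φ (s + 1) := by
    rw [youngConj, youngConj, Real.sSup_of_not_bddAbove h, Real.sSup_of_not_bddAbove h']
  linarith [hinj hs (show 0 < s + 1 by linarith) this]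

theorem strictMonoOn_youngConj (hinj : InjOn (youngConj Φ) (Ioi 0)) :
    StrictMonoOn (youngConj Φ) (Ioi 0) := by
  refine MonotoneOn.strictMonoOn_of_injOn (fun a ha b hb hab => ?_) hinj
  exact youngConj_le fun t ht =>
    (by gcongr : a * t - Φ t ≤ b * t - Φ t).trans
      (sub_le_youngConj (bddAbove_youngSet_of_injOn hinj hb) ht)

theorem youngConj_nonneg (hΦ0 : Φ 0 = 0) {s : ℝ} (h : BddAbove (youngSet Φ s)) :
    0 ≤ youngConj Φ s := by
  simpa [hΦ0] using sub_le_youngConj h le_rfl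

end

theorem min_rpow_one_sub_mul_max_rpow {u : ℝ} (hu : 0 < u) (a b : ℝ) :
    min (u ^ (1 - a)) (u ^ (1 - b)) * max (u ^ b) (u ^ a) = u := by
  have ha := Real.rpow_pos_of_pos hu a
  have hb := Real.rpow_pos_of_pos hu b
  rw [Real.rpow_sub hu, Real.rpow_sub hu, Real.rpow_one]
  rcases le_total (u ^ a) (u ^ b) with h | h
  · rw [max_eq_left h, min_eq_right (div_le_div_of_nonneg_left hu.le ha h)]
    field_simp
  · rw [max_eq_right h, min_eq_left (div_le_div_of_nonneg_left hu.le hb h)]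
    field_simp

namespace IsClassP

variable {Φ Φinv : ℝ → ℝ} {p q : ℝ}

theorem inv_mul_le (hΦ : IsClassP Φ Φinv p q) {u t : ℝ} (hu : 0 < u) (ht : 0 < t) :
    Φinv (u * t) ≤ max (u ^ (1/p)) (u ^ (1/q)) * Φinv t := by
  obtain ⟨-, -, -, -, -, -, ρ, -, -, -, hρ, hrep⟩ := hΦ
  have hmax : u ^ (1/p) * max 1 (u ^ (1/q - 1/p)) = max (u ^ (1/p)) (u ^ (1/q)) := by
    rw [mul_max_of_nonneg _ _ (Real.rpow_nonneg hu.le _), mul_one, ← Real.rpow_add hu,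
      add_sub_cancel]
  rw [hrep _ (mul_pos hu ht), hrep t ht, Real.mul_rpow hu.le ht.le, Real.mul_rpow hu.le ht.le,
    ← hmax]
  calc u ^ (1/p) * t ^ (1/p) * ρ (u ^ (1/q - 1/p) * t ^ (1/q - 1/p))
      ≤ u ^ (1/p) * t ^ (1/p) * (max 1 (u ^ (1/q - 1/p)) * ρ (t ^ (1/q - 1/p))) := by
        gcongr
        exact hρ _ _ (Real.rpow_pos_of_pos hu _) (Real.rpow_pos_of_pos ht _)
    _ = u ^ (1/p) * max 1 (u ^ (1/q - 1/p)) * (t ^ (1/p) * ρ (t ^ (1/q - 1/p))) := by ring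

theorem youngConj_min_rpow_mul_le (hΦ : IsClassP Φ Φinv p q) (hΦ0 : Φ 0 = 0) {u w : ℝ}
    (hu : 0 < u) (hw : 0 ≤ w) (hbdd : BddAbove (youngSet Φ w)) :
    youngConj Φ (min (u ^ (1 - 1/q)) (u ^ (1 - 1/p)) * w) ≤ u * youngConj Φ w := by
  have ⟨_, _, hΦpos, hinvpos, hinv, hinv', _⟩ := hΦ
  set m := min (u ^ (1 - 1/q)) (u ^ (1 - 1/p))
  have hm : 0 ≤ m := le_min (Real.rpow_nonneg hu.le _) (Real.rpow_nonneg hu.le _)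
  refine youngConj_le fun t ht => ?_
  rcases ht.eq_or_lt with rfl | ht
  · simpa [hΦ0] using mul_nonneg hu.le (youngConj_nonneg hΦ0 hbdd)
  have hΦu : 0 < Φ t / u := div_pos (hΦpos t ht) hu
  set τ := Φinv (Φ t / u)
  have hΦτ : u * Φ τ = Φ t := by rw [hinv' _ hΦu]; field_simp
  have htτ : t ≤ max (u ^ (1/p)) (u ^ (1/q)) * τ := by
    have := hΦ.inv_mul_le hu hΦu
    rwa [mul_div_cancel₀ _ hu.ne', hinv t ht] at this
  calc m * w * t - Φ t ≤ m * w * (max (u ^ (1/p)) (u ^ (1/q)) * τ) - Φ t := by gcongr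
    _ = u * (w * τ - Φ τ) := by
        linear_combination (w * τ) * min_rpow_one_sub_mul_max_rpow hu (1/q) (1/p) + hΦτ
    _ ≤ u * youngConj Φ w := by
        gcongr
        exact sub_le_youngConj hbdd (hinvpos _ hΦu).le

theorem min_rpow_mul_youngConj_inv_le (hΦ : IsClassP Φ Φinv p q) (hΦ0 : Φ 0 = 0)
    {Ψinv : ℝ → ℝ} (hpos : ∀ s, 0 < s → 0 < Ψinv s) (hleft : LeftInvOn Ψinv (youngConj Φ) (Ioi 0))
    (hright : ∀ s, 0 < s → youngConj Φ (Ψinv s) = s) {u v : ℝ} (hu : 0 < u) (hv : 0 < v) :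
    min (u ^ (1 - 1/q)) (u ^ (1 - 1/p)) * Ψinv v ≤ Ψinv (u * v) := by
  have hw := hpos v hv
  have hm : 0 < min (u ^ (1 - 1/q)) (u ^ (1 - 1/p)) :=
    lt_min (Real.rpow_pos_of_pos hu _) (Real.rpow_pos_of_pos hu _)
  refine ((strictMonoOn_youngConj hleft.injOn).le_iff_le (mul_pos hm hw)
    (hpos _ (mul_pos hu hv))).1 ?_
  calc youngConj Φ (min (u ^ (1 - 1/q)) (u ^ (1 - 1/p)) * Ψinv v)
      ≤ u * youngConj Φ (Ψinv v) :=
        hΦ.youngConj_min_rpow_mul_le hΦ0 hu hw.le (bddAbove_youngSet_of_injOn hleft.injOn hw)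
    _ = youngConj Φ (Ψinv (u * v)) := by rw [hright v hv, hright _ (mul_pos hu hv)]

end IsClassP

def maxGammaIntegrand (a b u : ℝ) : ℝ := max (u ^ (a - 1)) (u ^ (b - 1)) * Real.exp (-u)

section

variable {a b : ℝ}

theorem maxGammaIntegrand_nonneg {u : ℝ} (hu : 0 ≤ u) : 0 ≤ maxGammaIntegrand a b u := by
  unfold maxGammaIntegrand
  positivity

theorem integrableOn_maxGammaIntegrand (ha : 0 < a) (hb : 0 < b) :
    IntegrableOn (maxGammaIntegrand a b) (Ioi 0) := by
  refine ((Real.GammaIntegral_convergent ha).add (Real.GammaIntegral_convergent hb)).mono'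
    (by unfold maxGammaIntegrand; fun_prop) ?_
  filter_upwards [ae_restrict_mem measurableSet_Ioi] with u (hu : 0 < u)
  rw [Real.norm_of_nonneg (maxGammaIntegrand_nonneg hu.le), maxGammaIntegrand, Pi.add_apply,
    ← mul_add, mul_comm]
  gcongr
  exact max_le_add_of_nonneg (by positivity) (by positivity)

theorem mul_maxGammaIntegrand {x : ℝ} (hx : 0 < x) :
    x * maxGammaIntegrand a b x = max (x ^ a) (x ^ b) * Real.exp (-x) := by
  rw [maxGammaIntegrand, Real.rpow_sub_one hx.ne', Real.rpow_sub_one hx.ne',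
    max_div_div_right hx.le, ← mul_assoc, mul_div_cancel₀ _ hx.ne']

theorem exp_div_le_maxGammaIntegrand {F : ℝ → ℝ} (hpos : ∀ v, 0 < v → 0 < F v)
    (hF : ∀ u v, 0 < u → 0 < v → min (u ^ a) (u ^ b) * F v ≤ F (u * v)) {s t : ℝ}
    (hs : 0 < s) (ht : 0 < t) :
    Real.exp (-(s * t)) / (t * F (1 / t)) ≤ s * maxGammaIntegrand a b (s * t) / F s := by
  set x := s * t with hx_def
  have hx : 0 < x := mul_pos hs ht
  have hmin : min (x⁻¹ ^ a) (x⁻¹ ^ b) = (max (x ^ a) (x ^ b))⁻¹ := by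
    rw [Real.inv_rpow hx.le, Real.inv_rpow hx.le]
    rcases le_total (x ^ a) (x ^ b) with h | h
    · rw [max_eq_right h, min_eq_right (inv_anti₀ (Real.rpow_pos_of_pos hx a) h)]
    · rw [max_eq_left h, min_eq_left (inv_anti₀ (Real.rpow_pos_of_pos hx b) h)]
  have hFt : (max (x ^ a) (x ^ b))⁻¹ * F s ≤ F (1 / t) := by
    have := hF x⁻¹ s (inv_pos.2 hx) hs
    rwa [hmin, show x⁻¹ * s = 1 / t by rw [hx_def]; field_simp] at this
  have hM : 0 < max (x ^ a) (x ^ b) := lt_max_of_lt_left (Real.rpow_pos_of_pos hx a)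
  have hFs := hpos s hs
  calc Real.exp (-x) / (t * F (1 / t))
      ≤ Real.exp (-x) / (t * ((max (x ^ a) (x ^ b))⁻¹ * F s)) := by gcongr
    _ = x * maxGammaIntegrand a b x / t / F s := by
        rw [mul_maxGammaIntegrand hx]; field_simp
    _ = s * maxGammaIntegrand a b x / F s := by
        rw [hx_def]; field_simp

end

theorem lintegral_Ioi_ofReal_comp_mul_left {g : ℝ → ℝ} (hg : IntegrableOn g (Ioi 0))
    (hg0 : ∀ u, 0 < u → 0 ≤ g u) {s : ℝ} (hs : 0 < s) :
    ∫⁻ t in Ioi 0, ENNReal.ofReal (s * g (s * t)) = ∫⁻ u in Ioi 0, ENNReal.ofReal (g u) := by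
  have hgs : IntegrableOn (fun t => s * g (s * t)) (Ioi 0) :=
    ((integrableOn_Ioi_comp_mul_left_iff g 0 hs).2 (by rwa [mul_zero])).const_mul s
  rw [← ofReal_integral_eq_lintegral_ofReal hgs
      (ae_restrict_of_forall_mem measurableSet_Ioi fun t ht => mul_nonneg hs.le
        (hg0 _ (mul_pos hs ht))),
    ← ofReal_integral_eq_lintegral_ofReal hg (ae_restrict_of_forall_mem measurableSet_Ioi hg0),
    integral_const_mul, ← smul_eq_mul, integral_comp_mul_left_Ioi' g 0 hs, mul_zero]

theorem lintegral_exp_div_le_maxGammaIntegrand {a b : ℝ} (ha : 0 < a) (hb : 0 < b)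
    {F : ℝ → ℝ} (hpos : ∀ v, 0 < v → 0 < F v)
    (hF : ∀ u v, 0 < u → 0 < v → min (u ^ a) (u ^ b) * F v ≤ F (u * v)) {s : ℝ} (hs : 0 < s) :
    ∫⁻ t in Ioi 0, ENNReal.ofReal (Real.exp (-(s * t)) / (t * F (1 / t)))
      ≤ (∫⁻ u in Ioi 0, ENNReal.ofReal (maxGammaIntegrand a b u)) / ENNReal.ofReal (F s) := by
  calc ∫⁻ t in Ioi 0, ENNReal.ofReal (Real.exp (-(s * t)) / (t * F (1 / t)))
      ≤ ∫⁻ t in Ioi 0,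
          ENNReal.ofReal (s * maxGammaIntegrand a b (s * t)) * (ENNReal.ofReal (F s))⁻¹ := by
        refine setLIntegral_mono' measurableSet_Ioi fun t ht => ?_
        rw [← div_eq_mul_inv, ← ENNReal.ofReal_div_of_pos (hpos s hs)]
        exact ENNReal.ofReal_le_ofReal (exp_div_le_maxGammaIntegrand hpos hF hs ht)
    _ = (∫⁻ u in Ioi 0, ENNReal.ofReal (maxGammaIntegrand a b u)) / ENNReal.ofReal (F s) := by
        rw [lintegral_mul_const' _ _ (ENNReal.inv_ne_top.2 (ENNReal.ofReal_pos.2 (hpos s hs)).ne'),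
          lintegral_Ioi_ofReal_comp_mul_left (integrableOn_maxGammaIntegrand ha hb)
            (fun u hu => maxGammaIntegrand_nonneg hu.le) hs, div_eq_mul_inv]

theorem one_div_div_sub_one {p : ℝ} (hp : 1 < p) : 1 / (p / (p - 1)) = 1 - 1 / p := by
  rw [one_div, one_div]
  exact (Real.HolderConjugate.conjExponent hp).one_sub_inv.symm

theorem one_sub_one_div_pos {p : ℝ} (hp : 1 < p) : 0 < 1 - 1 / p :=
  sub_pos.2 ((div_lt_one (zero_lt_one.trans hp)).2 hp)

/-- for `Φ` of class `𝒫` with complementary Young function `Φ̃`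
(with inverse `Φ̃⁻¹`), and Hölder conjugates `p' = p/(p−1)`, `q' = q/(q−1)`, the constant
`K = ∫₀^∞ max(u^{1/q'−1}, u^{1/p'−1})·e^{−u} du` is finite and for every `s > 0`
`∫₀^∞ e^{−st}/(t·Φ̃⁻¹(1/t)) dt ≤ K/Φ̃⁻¹(s)`. -/
theorem integral_exp_div_complementary_bound
    (Φ Φinv Φt Φtinv : ℝ → ℝ) (p q : ℝ) (hΦ : IsClassP Φ Φinv p q)
    (hΦ0 : Φ 0 = 0)
    (hΦt : ∀ s : ℝ, Φt s = sSup {x : ℝ | ∃ t : ℝ, 0 ≤ t ∧ x = s * t - Φ t})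
    (hΦtinvpos : ∀ s : ℝ, 0 < s → 0 < Φtinv s)
    (hΦtinv1 : ∀ t : ℝ, 0 < t → Φtinv (Φt t) = t)
    (hΦtinv2 : ∀ s : ℝ, 0 < s → Φt (Φtinv s) = s) :
    (∫⁻ u in Set.Ioi (0:ℝ),
        ENNReal.ofReal (max (u ^ (1 / (q / (q - 1)) - 1)) (u ^ (1 / (p / (p - 1)) - 1)) *
          Real.exp (-u))) < ∞ ∧
    ∀ s : ℝ, 0 < s →
      (∫⁻ t in Set.Ioi (0:ℝ), ENNReal.ofReal (Real.exp (-(s * t)) / (t * Φtinv (1/t))))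
        ≤ (∫⁻ u in Set.Ioi (0:ℝ),
            ENNReal.ofReal (max (u ^ (1 / (q / (q - 1)) - 1)) (u ^ (1 / (p / (p - 1)) - 1)) *
              Real.exp (-u))) / ENNReal.ofReal (Φtinv s) := by
  have hp : 1 < p := hΦ.1
  have hq : 1 < q := hp.trans hΦ.2.1
  obtain rfl : Φt = youngConj Φ := funext hΦt
  rw [one_div_div_sub_one hq, one_div_div_sub_one hp]
  refine ⟨(integrableOn_maxGammaIntegrand (one_sub_one_div_pos hq)
    (one_sub_one_div_pos hp)).lintegral_lt_top, fun s hs => ?_⟩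
  exact lintegral_exp_div_le_maxGammaIntegrand (one_sub_one_div_pos hq) (one_sub_one_div_pos hp)
    hΦtinvpos (fun u v hu hv => hΦ.min_rpow_mul_youngConj_inv_le hΦ0 hΦtinvpos
      (fun t ht => hΦtinv1 t ht) hΦtinv2 hu hv) hs
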